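/- Distributional symmetry of the antithetic estimator: in the antithetic setup (with 𝒫_h, μ_h, σ_{h,j} and (ℒ^{j₁}σ_{j₂})_h arbitrary measurable maps ℝ^d → ℝ^d for each step size h > 0), for every N ∈ ℕ and every 0 ≤ n ≤ N the pair of random vectors (Y^f_n, Y^c_n) is identically distributed with the pair (Y^a_n, Y^c_n). In particular, for every bounded measurable φ : ℝ^d → ℝ, E[φ(Y^f_n)] = E[φ(Y^a_n)], so the telescoping identity E[(φ(Y^f_N)+φ(Y^a_N))/2] = E[φ(Y^f_N)] required by the antithetic MLMC method holds. -/

import Mathlib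

open MeasureTheory ProbabilityTheory
open scoped ENNReal

/-- Euclidean space `ℝ^d`. -/
abbrev Euc (d : ℕ) : Type := EuclideanSpace ℝ (Fin d)

/-- One step of the modified Milstein scheme without Lévy areas: the maps
`P`, `μh`, `σh`, `Lh` are the (already step-size-specialized) projection and
modified coefficients, `h` is the length of the step and `ξ` the vector of
Brownian increments over the step. -/
noncomputable def mmStep {V : Type} [AddCommGroup V] [Module ℝ V] {m : ℕ}
    (P μh : V → V) (σh : Fin m → V → V) (Lh : Fin m → Fin m → V → V)
    (h : ℝ) (ξ : Fin m → ℝ) (y : V) : V :=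
  P y + h • μh (P y) + (∑ j, ξ j • σh j (P y))
    + ∑ j₁, ∑ j₂, ((ξ j₁ * ξ j₂ - (if j₁ = j₂ then h else 0)) / 2) • Lh j₁ j₂ (P y)

/-!
Both schemes are measurable functions of `X₀` and of the vector of half-step increments `δW`.
The antithetic path is the fine path driven by `δW` with the two halves of every coarse step
swapped, whereas the coarse path sees only the sums `δW_{·,n,0} + δW_{·,n,1}` and is unchanged by
that swap. The increments are i.i.d. and independent of `X₀`, so the swap preserves the joint law
of `(X₀, δW)`; pushing it forward through the schemes gives `(Y^f_n, Y^c_n) ~ (Y^a_n, Y^c_n)`.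
-/

open Function

section DrivenIteration

variable {V W : Type*}

def iterDriven (step : ℕ → W → V → V) : ℕ → V → W → V
  | 0, x, _ => x
  | n + 1, x, w => step n w (iterDriven step n x w)

lemma eq_iterDriven {step : ℕ → W → V → V} {N : ℕ} {Y : ℕ → V} {x : V} {w : W}
    (h0 : Y 0 = x) (hsucc : ∀ n < N, Y (n + 1) = step n w (Y n)) :
    ∀ n ≤ N, Y n = iterDriven step n x w := by
  intro n hn
  induction n with
  | zero => exact h0
  | succ n ih => rw [hsucc n hn, ih (Nat.le_of_succ_le hn), iterDriven]

lemma measurable_iterDriven [MeasurableSpace V] [MeasurableSpace W] {step : ℕ → W → V → V}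
    (hstep : ∀ n, Measurable (uncurry (step n))) (n : ℕ) :
    Measurable (uncurry (iterDriven step n)) := by
  induction n with
  | zero => exact measurable_fst
  | succ n ih => exact (hstep n).comp (measurable_snd.prodMk ih)

end DrivenIteration

lemma identDistrib_prodMk_comp_perm {Ω E β ι : Type*} [MeasurableSpace Ω] [MeasurableSpace E]
    [MeasurableSpace β] [Countable ι] {μ : Measure Ω} [IsProbabilityMeasure μ] {X : Ω → E}
    {W : ι → Ω → β} {ν : Measure β} (hX : AEMeasurable X μ) (hW : ∀ i, AEMeasurable (W i) μ)
    (hind : iIndepFun W μ) (hlaw : ∀ i, μ.map (W i) = ν)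
    (hXW : IndepFun X (fun ω i => W i ω) μ) (e : Equiv.Perm ι) :
    IdentDistrib (fun ω => (X ω, fun i => W i ω)) (fun ω => (X ω, fun i => W (e i) ω)) μ μ := by
  have hWe : IdentDistrib (fun ω i => W i ω) (fun ω i => W (e i) ω) μ μ :=
    IdentDistrib.pi (fun i => ⟨hW i, hW (e i), by rw [hlaw, hlaw]⟩) hind
      (hind.precomp e.injective)
  have hXWe : IndepFun X (fun ω i => W (e i) ω) μ :=
    hXW.comp measurable_id (ψ := fun (w : ι → β) i => w (e i)) (by fun_prop)
  exact (IdentDistrib.refl hX).prodMk hWe hXW hXWe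

lemma ProbabilityTheory.IdentDistrib.integral_add_div_two_eq {Ω α : Type*} [MeasurableSpace Ω]
    [MeasurableSpace α] {μ : Measure Ω} {X Y : Ω → α} {φ : α → ℝ} (h : IdentDistrib X Y μ μ)
    (hφ : Measurable φ) (hint : Integrable (fun ω => φ (X ω)) μ) :
    ∫ ω, (φ (X ω) + φ (Y ω)) / 2 ∂μ = ∫ ω, φ (X ω) ∂μ := by
  have hφXY := h.comp hφ
  rw [integral_div, integral_add (g := fun ω => φ (Y ω)) hint (hφXY.integrable_iff.1 hint)]
  rw [← show ∫ ω, φ (X ω) ∂μ = ∫ ω, φ (Y ω) ∂μ from hφXY.integral_eq]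
  ring

lemma measurable_mmStep {V : Type} [NormedAddCommGroup V] [NormedSpace ℝ V] [MeasurableSpace V]
    [BorelSpace V] [SecondCountableTopology V] {m : ℕ} {P μh : V → V} {σh : Fin m → V → V}
    {Lh : Fin m → Fin m → V → V} (hP : Measurable P) (hμh : Measurable μh)
    (hσh : ∀ j, Measurable (σh j)) (hLh : ∀ j₁ j₂, Measurable (Lh j₁ j₂)) (h : ℝ) :
    Measurable (uncurry (mmStep P μh σh Lh h)) := by
  simp only [uncurry_def, mmStep]
  fun_prop

section Antithetic

variable {V : Type*} {m N : ℕ}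

def swapHalves (m N : ℕ) : Equiv.Perm (Fin m × Fin N × Bool) where
  toFun q := (q.1, q.2.1, !q.2.2)
  invFun q := (q.1, q.2.1, !q.2.2)
  left_inv q := by simp
  right_inv q := by simp

/-- Past the horizon `N` the steps are the identity, so `iterDriven` may run over all of `ℕ`. -/
def halfStep (S : (Fin m → ℝ) → V → V) (b : Bool) (n : ℕ) (w : Fin m × Fin N × Bool → ℝ)
    (y : V) : V :=
  if hn : n < N then S (fun j => w (j, ⟨n, hn⟩, b)) y else y

def fineStep (S : (Fin m → ℝ) → V → V) (n : ℕ) (w : Fin m × Fin N × Bool → ℝ) (y : V) : V :=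
  halfStep S true n w (halfStep S false n w y)

def coarseStep (S : (Fin m → ℝ) → V → V) (n : ℕ) (w : Fin m × Fin N × Bool → ℝ) (y : V) : V :=
  if hn : n < N then S (fun j => w (j, ⟨n, hn⟩, false) + w (j, ⟨n, hn⟩, true)) y else y

lemma coarseStep_swapHalves (S : (Fin m → ℝ) → V → V) (n : ℕ) (w : Fin m × Fin N × Bool → ℝ) :
    coarseStep S n (fun q => w (swapHalves m N q)) = coarseStep S n w := by
  funext y
  by_cases hn : n < N
  · simp only [coarseStep, hn, dite_true, swapHalves, Equiv.coe_fn_mk, Bool.not_false,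
      Bool.not_true, add_comm]
  · simp only [coarseStep, hn, dite_false]

lemma iterDriven_coarseStep_swapHalves (S : (Fin m → ℝ) → V → V) (n : ℕ) (x : V)
    (w : Fin m × Fin N × Bool → ℝ) :
    iterDriven (coarseStep S) n x (fun q => w (swapHalves m N q))
      = iterDriven (coarseStep S) n x w := by
  induction n with
  | zero => rfl
  | succ n ih => rw [iterDriven, iterDriven, ih, coarseStep_swapHalves]

variable [MeasurableSpace V] {S : (Fin m → ℝ) → V → V}

lemma measurable_halfStep (hS : Measurable (uncurry S)) (b : Bool) (n : ℕ) :
    Measurable (uncurry (halfStep (N := N) S b n)) := by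
  by_cases hn : n < N
  · simp only [uncurry_def, halfStep, hn, dite_true]
    exact hS.comp (f := fun p : (Fin m × Fin N × Bool → ℝ) × V =>
      (fun j => p.1 (j, ⟨n, hn⟩, b), p.2)) (by fun_prop)
  · simpa only [uncurry_def, halfStep, hn, dite_false] using measurable_snd

lemma measurable_fineStep (hS : Measurable (uncurry S)) (n : ℕ) :
    Measurable (uncurry (fineStep (N := N) S n)) :=
  (measurable_halfStep hS true n).comp (measurable_fst.prodMk (measurable_halfStep hS false n))

lemma measurable_coarseStep (hS : Measurable (uncurry S)) (n : ℕ) :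
    Measurable (uncurry (coarseStep (N := N) S n)) := by
  by_cases hn : n < N
  · simp only [uncurry_def, coarseStep, hn, dite_true]
    exact hS.comp (f := fun p : (Fin m × Fin N × Bool → ℝ) × V =>
      (fun j => p.1 (j, ⟨n, hn⟩, false) + p.1 (j, ⟨n, hn⟩, true), p.2)) (by fun_prop)
  · simpa only [uncurry_def, coarseStep, hn, dite_false] using measurable_snd

theorem identDistrib_fine_coarse_swapHalves {V Ω : Type*} [MeasurableSpace V] [MeasurableSpace Ω]
    {μ : Measure Ω} [IsProbabilityMeasure μ] {m N : ℕ} {Sc Sf : (Fin m → ℝ) → V → V}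
    (hSc : Measurable (uncurry Sc)) (hSf : Measurable (uncurry Sf)) {X₀ : Ω → V}
    (hX₀ : Measurable X₀) {δW : Fin m × Fin N × Bool → Ω → ℝ} (hδW : ∀ q, Measurable (δW q))
    (hind : iIndepFun δW μ) {ν : Measure ℝ} (hlaw : ∀ q, μ.map (δW q) = ν)
    (hX₀δW : IndepFun X₀ (fun ω q => δW q ω) μ) (n : ℕ) :
    IdentDistrib
      (fun ω => (iterDriven (fineStep Sf) n (X₀ ω) (fun q => δW q ω),
        iterDriven (coarseStep Sc) n (X₀ ω) (fun q => δW q ω)))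
      (fun ω => (iterDriven (fineStep Sf) n (X₀ ω) (fun q => δW (swapHalves m N q) ω),
        iterDriven (coarseStep Sc) n (X₀ ω) (fun q => δW q ω))) μ μ := by
  have hscheme := (measurable_iterDriven (measurable_fineStep (N := N) hSf) n).prodMk
    (measurable_iterDriven (measurable_coarseStep (N := N) hSc) n)
  have hnoise := identDistrib_prodMk_comp_perm hX₀.aemeasurable (fun q => (hδW q).aemeasurable)
    hind hlaw hX₀δW (swapHalves m N)
  have hcoarse (ω : Ω) := iterDriven_coarseStep_swapHalves Sc n (X₀ ω) (fun q => δW q ω)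
  simpa only [uncurry_def, comp_def, hcoarse] using hnoise.comp hscheme

end Antithetic

theorem antithetic_distributional_symmetry_general
    (d m : ℕ) (T : ℝ) (hT : 0 < T)
    (P μh : ℝ → Euc d → Euc d)
    (σh : ℝ → Fin m → Euc d → Euc d)
    (Lh : ℝ → Fin m → Fin m → Euc d → Euc d)
    (hPmeas : ∀ h : ℝ, 0 < h → Measurable (P h))
    (hμhmeas : ∀ h : ℝ, 0 < h → Measurable (μh h))
    (hσhmeas : ∀ h : ℝ, 0 < h → ∀ j, Measurable (σh h j))
    (hLhmeas : ∀ h : ℝ, 0 < h → ∀ j₁ j₂, Measurable (Lh h j₁ j₂)) :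
      ∀ N : ℕ, 0 < N →
      ∀ (Ω : Type) [MeasurableSpace Ω] (Pr : Measure Ω) [IsProbabilityMeasure Pr],
      ∀ X₀ : Ω → Euc d, Measurable X₀ →
      ∀ δW : Fin m × Fin N × Bool → Ω → ℝ,
        (∀ q, Measurable (δW q)) →
        iIndepFun δW Pr →
        (∀ q, Measure.map (δW q) Pr = gaussianReal 0 (T / N / 2).toNNReal) →
        IndepFun X₀ (fun ω (q : Fin m × Fin N × Bool) => δW q ω) Pr →
      ∀ Yc Yf Yfm Ya Yam : ℕ → Ω → Euc d,
        Yc 0 = X₀ → Yf 0 = X₀ → Ya 0 = X₀ →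
        (∀ (n : ℕ) (hn : n < N), ∀ ω, Yc (n + 1) ω
          = mmStep (P (T / N)) (μh (T / N)) (σh (T / N)) (Lh (T / N)) (T / N)
              (fun j => δW (j, ⟨n, hn⟩, false) ω + δW (j, ⟨n, hn⟩, true) ω) (Yc n ω)) →
        (∀ (n : ℕ) (hn : n < N), ∀ ω, Yfm n ω
          = mmStep (P (T / N / 2)) (μh (T / N / 2)) (σh (T / N / 2)) (Lh (T / N / 2))
              (T / N / 2) (fun j => δW (j, ⟨n, hn⟩, false) ω) (Yf n ω)) →
        (∀ (n : ℕ) (hn : n < N), ∀ ω, Yf (n + 1) ω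
          = mmStep (P (T / N / 2)) (μh (T / N / 2)) (σh (T / N / 2)) (Lh (T / N / 2))
              (T / N / 2) (fun j => δW (j, ⟨n, hn⟩, true) ω) (Yfm n ω)) →
        (∀ (n : ℕ) (hn : n < N), ∀ ω, Yam n ω
          = mmStep (P (T / N / 2)) (μh (T / N / 2)) (σh (T / N / 2)) (Lh (T / N / 2))
              (T / N / 2) (fun j => δW (j, ⟨n, hn⟩, true) ω) (Ya n ω)) →
        (∀ (n : ℕ) (hn : n < N), ∀ ω, Ya (n + 1) ω
          = mmStep (P (T / N / 2)) (μh (T / N / 2)) (σh (T / N / 2)) (Lh (T / N / 2))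
              (T / N / 2) (fun j => δW (j, ⟨n, hn⟩, false) ω) (Yam n ω)) →
        ∀ n : ℕ, n ≤ N →
          (Measure.map (fun ω => (Yf n ω, Yc n ω)) Pr
            = Measure.map (fun ω => (Ya n ω, Yc n ω)) Pr) ∧
          (∀ φ : Euc d → ℝ, Measurable φ → (∃ K : ℝ, ∀ x, |φ x| ≤ K) →
            (∫ ω, φ (Yf n ω) ∂Pr) = ∫ ω, φ (Ya n ω) ∂Pr ∧
            (∫ ω, (φ (Yf N ω) + φ (Ya N ω)) / 2 ∂Pr) = ∫ ω, φ (Yf N ω) ∂Pr) := by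
  intro N hN Ω _ Pr _ X₀ hX₀ δW hδW hind hlaw hX₀δW Yc Yf Yfm Ya Yam hYc0 hYf0 hYa0 hYcS hYfmS
    hYfS hYamS hYaS
  have hh : 0 < T / N := div_pos hT (Nat.cast_pos.2 hN)
  have hh2 : 0 < T / N / 2 := half_pos hh
  set Sc := mmStep (P (T / N)) (μh (T / N)) (σh (T / N)) (Lh (T / N)) (T / N)
  set Sf := mmStep (P (T / N / 2)) (μh (T / N / 2)) (σh (T / N / 2)) (Lh (T / N / 2)) (T / N / 2)
  have hSc : Measurable (uncurry Sc) :=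
    measurable_mmStep (hPmeas _ hh) (hμhmeas _ hh) (hσhmeas _ hh) (hLhmeas _ hh) _
  have hSf : Measurable (uncurry Sf) :=
    measurable_mmStep (hPmeas _ hh2) (hμhmeas _ hh2) (hσhmeas _ hh2) (hLhmeas _ hh2) _
  have hYc (ω : Ω) : ∀ n ≤ N, Yc n ω = iterDriven (coarseStep Sc) n (X₀ ω) (fun q => δW q ω) :=
    eq_iterDriven (congrFun hYc0 ω) fun n hn => by simp only [hYcS n hn, coarseStep, hn, dite_true]
  have hYf (ω : Ω) : ∀ n ≤ N, Yf n ω = iterDriven (fineStep Sf) n (X₀ ω) (fun q => δW q ω) :=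
    eq_iterDriven (congrFun hYf0 ω) fun n hn => by
      simp only [hYfS n hn, hYfmS n hn, fineStep, halfStep, hn, dite_true]
  have hYa (ω : Ω) : ∀ n ≤ N,
      Ya n ω = iterDriven (fineStep Sf) n (X₀ ω) (fun q => δW (swapHalves m N q) ω) :=
    eq_iterDriven (congrFun hYa0 ω) fun n hn => by
      simp only [hYaS n hn, hYamS n hn, fineStep, halfStep, hn, dite_true, swapHalves,
        Equiv.coe_fn_mk, Bool.not_true, Bool.not_false]
  have hpair (n : ℕ) (hn : n ≤ N) :
      IdentDistrib (fun ω => (Yf n ω, Yc n ω)) (fun ω => (Ya n ω, Yc n ω)) Pr Pr := by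
    simp only [hYf _ n hn, hYc _ n hn, hYa _ n hn]
    exact identDistrib_fine_coarse_swapHalves hSc hSf hX₀ hδW hind hlaw hX₀δW n
  have hfine (n : ℕ) (hn : n ≤ N) : IdentDistrib (Yf n) (Ya n) Pr Pr :=
    (hpair n hn).comp measurable_fst
  refine fun n hn => ⟨(hpair n hn).map_eq, fun φ hφ ⟨K, hK⟩ =>
    ⟨((hfine n hn).comp hφ).integral_eq, (hfine N le_rfl).integral_add_div_two_eq hφ ?_⟩⟩
  exact .of_bound (hφ.comp_aemeasurable (hfine N le_rfl).aemeasurable_fst).aestronglyMeasurable K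
    (ae_of_all _ fun ω => (Real.norm_eq_abs _).trans_le (hK _))

/-- Distributional symmetry of the antithetic estimator: the pair
`(Y^f_n, Y^c_n)` has the same law as `(Y^a_n, Y^c_n)`, hence the antithetic
telescoping identity holds for every bounded measurable payoff. -/
theorem antithetic_distributional_symmetry
    (d m : ℕ) (hd : 1 ≤ d) (hm : 1 ≤ m) (T : ℝ) (hT : 0 < T)
    (P μh : ℝ → Euc d → Euc d)
    (σh : ℝ → Fin m → Euc d → Euc d)
    (Lh : ℝ → Fin m → Fin m → Euc d → Euc d)
    (hPmeas : ∀ h : ℝ, 0 < h → Measurable (P h))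
    (hμhmeas : ∀ h : ℝ, 0 < h → Measurable (μh h))
    (hσhmeas : ∀ h : ℝ, 0 < h → ∀ j, Measurable (σh h j))
    (hLhmeas : ∀ h : ℝ, 0 < h → ∀ j₁ j₂, Measurable (Lh h j₁ j₂)) :
      ∀ N : ℕ, 0 < N →
      ∀ (Ω : Type) [MeasurableSpace Ω] (Pr : Measure Ω) [IsProbabilityMeasure Pr],
      ∀ X₀ : Ω → Euc d, Measurable X₀ →
      ∀ δW : Fin m × Fin N × Bool → Ω → ℝ,
        (∀ q, Measurable (δW q)) →
        iIndepFun δW Pr →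
        (∀ q, Measure.map (δW q) Pr = gaussianReal 0 (T / N / 2).toNNReal) →
        IndepFun X₀ (fun ω (q : Fin m × Fin N × Bool) => δW q ω) Pr →
      ∀ Yc Yf Yfm Ya Yam : ℕ → Ω → Euc d,
        Yc 0 = X₀ → Yf 0 = X₀ → Ya 0 = X₀ →
        (∀ (n : ℕ) (hn : n < N), ∀ ω, Yc (n + 1) ω
          = mmStep (P (T / N)) (μh (T / N)) (σh (T / N)) (Lh (T / N)) (T / N)
              (fun j => δW (j, ⟨n, hn⟩, false) ω + δW (j, ⟨n, hn⟩, true) ω) (Yc n ω)) →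
        (∀ (n : ℕ) (hn : n < N), ∀ ω, Yfm n ω
          = mmStep (P (T / N / 2)) (μh (T / N / 2)) (σh (T / N / 2)) (Lh (T / N / 2))
              (T / N / 2) (fun j => δW (j, ⟨n, hn⟩, false) ω) (Yf n ω)) →
        (∀ (n : ℕ) (hn : n < N), ∀ ω, Yf (n + 1) ω
          = mmStep (P (T / N / 2)) (μh (T / N / 2)) (σh (T / N / 2)) (Lh (T / N / 2))
              (T / N / 2) (fun j => δW (j, ⟨n, hn⟩, true) ω) (Yfm n ω)) →
        (∀ (n : ℕ) (hn : n < N), ∀ ω, Yam n ω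
          = mmStep (P (T / N / 2)) (μh (T / N / 2)) (σh (T / N / 2)) (Lh (T / N / 2))
              (T / N / 2) (fun j => δW (j, ⟨n, hn⟩, true) ω) (Ya n ω)) →
        (∀ (n : ℕ) (hn : n < N), ∀ ω, Ya (n + 1) ω
          = mmStep (P (T / N / 2)) (μh (T / N / 2)) (σh (T / N / 2)) (Lh (T / N / 2))
              (T / N / 2) (fun j => δW (j, ⟨n, hn⟩, false) ω) (Yam n ω)) →
        ∀ n : ℕ, n ≤ N →
          (Measure.map (fun ω => (Yf n ω, Yc n ω)) Pr
            = Measure.map (fun ω => (Ya n ω, Yc n ω)) Pr) ∧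
          (∀ φ : Euc d → ℝ, Measurable φ → (∃ K : ℝ, ∀ x, |φ x| ≤ K) →
            (∫ ω, φ (Yf n ω) ∂Pr) = ∫ ω, φ (Ya n ω) ∂Pr ∧
            (∫ ω, (φ (Yf N ω) + φ (Ya N ω)) / 2 ∂Pr) = ∫ ω, φ (Yf N ω) ∂Pr) :=
  antithetic_distributional_symmetry_general d m T hT P μh σh Lh hPmeas hμhmeas hσhmeas hLhmeas
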